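/- Let Λ ⊆ ℝ^d be a lattice and p ∈ ℝ^d with 0 ∈ cl(p,Λ) (the origin is among the lattice points closest to p). Then conv{ (2/‖z‖²)·z : z ∈ cl(p,Λ) \ {0} } is a face of VC(Λ)°, namely the face of VC(Λ)° on which the linear functional y ↦ ⟨p,y⟩ attains value 1. -/

import Mathlib

/-!
Projecting `p` onto `lin Λ` gives a point of `VC(Λ)`, so `⟪p, ·⟫ ≤ 1` on `VC(Λ)°`. Every
`(2/‖z‖²) z` with `z ∈ Λ` lies in `VC(Λ)°`, and `⟪p, (2/‖z‖²) z⟫ = 1` exactly when `z ≠ 0` is as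
close to `p` as `0` is. Since `Λ` is discrete, all but finitely many of these points lie in a
small simplex around `0`, so they lie in the hull of a finite set `K` on which `⟪p, ·⟫ ≤ 1`, with
equality only at the points `(2/‖z‖²) z`, `z ∈ cl(p,Λ) \ {0}`. A point of `VC(Λ)°` outside
`conv K` would be separated from it by a hyperplane, and the normal of that hyperplane, projected
to `lin Λ`, is a point of `VC(Λ)` violating duality. Finally, a point of `conv K` on which
`⟪p, ·⟫ = 1` is a convex combination of points of `K` on that hyperplane.
-/

open scoped RealInnerProductSpace

/-- A lattice in a real inner product space: the image of `ℤ^k` under an injective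
linear map, i.e. the set of integer combinations of linearly independent vectors. -/
def IsLattice {E : Type*} [NormedAddCommGroup E] [InnerProductSpace ℝ E] (Λ : Set E) : Prop :=
  ∃ (k : ℕ) (b : Fin k → E), LinearIndependent ℝ b ∧
    Λ = {x | ∃ z : Fin k → ℤ, x = ∑ i, (z i : ℝ) • b i}

/-- The Voronoi cell of a lattice `Λ`:
`{x ∈ lin(Λ) : ‖x‖ ≤ ‖x − z‖ for all z ∈ Λ}`. -/
def VorCell {E : Type*} [NormedAddCommGroup E] [InnerProductSpace ℝ E] (Λ : Set E) : Set E :=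
  {x | x ∈ Submodule.span ℝ Λ ∧ ∀ z ∈ Λ, ‖x‖ ≤ ‖x - z‖}

/-- The dual polytope of the Voronoi cell of `Λ`, taken within `lin(Λ)`:
`{y ∈ lin(Λ) : ⟨x,y⟩ ≤ 1 for all x ∈ VC(Λ)}`. -/
def dualVorCell {E : Type*} [NormedAddCommGroup E] [InnerProductSpace ℝ E]
    (Λ : Set E) : Set E :=
  {y | y ∈ Submodule.span ℝ Λ ∧ ∀ x ∈ VorCell Λ, ⟪x, y⟫ ≤ 1}

open Set Metric Topology

section

variable {E : Type*} [NormedAddCommGroup E] [InnerProductSpace ℝ E]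

theorem norm_le_norm_sub_iff (x z : E) : ‖x‖ ≤ ‖x - z‖ ↔ 2 * ⟪x, z⟫ ≤ ‖z‖ ^ 2 := by
  rw [← sq_le_sq₀ (norm_nonneg _) (norm_nonneg _), norm_sub_sq_real]
  constructor <;> intro h <;> linarith

theorem norm_eq_norm_sub_iff (x z : E) : ‖x‖ = ‖x - z‖ ↔ 2 * ⟪x, z⟫ = ‖z‖ ^ 2 := by
  rw [← sq_eq_sq₀ (norm_nonneg _) (norm_nonneg _), norm_sub_sq_real]
  constructor <;> intro h <;> linarith

theorem Submodule.inner_starProjection_of_mem (K : Submodule ℝ E) [K.HasOrthogonalProjection]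
    (w : E) {v : E} (hv : v ∈ K) : ⟪K.starProjection w, v⟫ = ⟪w, v⟫ := by
  rw [K.inner_starProjection_left_eq_right, K.starProjection_eq_self_iff.mpr hv]

theorem exists_inner_lt_one_lt_inner [CompleteSpace E] {C : Set E} {y : E} (hC : Convex ℝ C)
    (hCc : IsClosed C) (h0 : (0 : E) ∈ C) (hy : y ∉ C) :
    ∃ w : E, (∀ v ∈ C, ⟪w, v⟫ < 1) ∧ 1 < ⟪w, y⟫ := by
  obtain ⟨f, u, hfC, hfy⟩ := geometric_hahn_banach_closed_point hC hCc hy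
  have hu : 0 < u := by simpa using hfC 0 h0
  have hw : ∀ v, ⟪u⁻¹ • (InnerProductSpace.toDual ℝ E).symm f, v⟫ = f v / u := fun v ↦ by
    rw [real_inner_smul_left, InnerProductSpace.toDual_symm_apply, inv_mul_eq_div]
  exact ⟨_, fun v hv ↦ by rw [hw, div_lt_one hu]; exact hfC v hv,
    by rw [hw, one_lt_div hu]; exact hfy⟩

theorem mem_convexHull_inner_eq_one {p y : E} {s : Set E} (hs : ∀ v ∈ s, ⟪p, v⟫ ≤ 1)
    (hy : y ∈ convexHull ℝ s) (hpy : ⟪p, y⟫ = 1) :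
    y ∈ convexHull ℝ {v ∈ s | ⟪p, v⟫ = 1} := by
  set F := convexHull ℝ {v ∈ s | ⟪p, v⟫ = 1}
  suffices convexHull ℝ s ⊆ {x | ⟪p, x⟫ ≤ 1 ∧ (⟪p, x⟫ = 1 → x ∈ F)} from (this hy).2 hpy
  refine convexHull_min (fun v hv ↦ ⟨hs v hv, fun h ↦ subset_convexHull ℝ _ ⟨hv, h⟩⟩) ?_
  rintro x₁ ⟨hle₁, hF₁⟩ x₂ ⟨hle₂, hF₂⟩ a b ha hb hab
  simp only [mem_ofPred_eq, inner_add_right, real_inner_smul_right]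
  refine ⟨by nlinarith, fun h ↦ ?_⟩
  rcases ha.eq_or_lt with rfl | ha
  · obtain rfl : b = 1 := by linarith
    simpa using hF₂ (by linarith)
  rcases hb.eq_or_lt with rfl | hb
  · obtain rfl : a = 1 := by linarith
    simpa using hF₁ (by linarith)
  exact convex_convexHull ℝ _ (hF₁ (by nlinarith)) (hF₂ (by nlinarith)) ha.le hb.le hab

noncomputable def voronoiNormal (z : E) : E := (2 / ‖z‖ ^ 2) • z

@[simp]
theorem voronoiNormal_zero : voronoiNormal (0 : E) = 0 := by simp [voronoiNormal]

theorem norm_voronoiNormal (z : E) : ‖voronoiNormal z‖ = 2 / ‖z‖ := by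
  rcases eq_or_ne z 0 with rfl | hz
  · simp
  · rw [voronoiNormal, norm_smul, Real.norm_of_nonneg (by positivity)]
    field_simp

theorem inner_voronoiNormal (x z : E) : ⟪x, voronoiNormal z⟫ = 2 * ⟪x, z⟫ / ‖z‖ ^ 2 := by
  rw [voronoiNormal, real_inner_smul_right]
  ring

theorem inner_voronoiNormal_le_one_iff (x z : E) :
    ⟪x, voronoiNormal z⟫ ≤ 1 ↔ ‖x‖ ≤ ‖x - z‖ := by
  rcases eq_or_ne z 0 with rfl | hz
  · simp
  · rw [inner_voronoiNormal, div_le_one (by positivity), norm_le_norm_sub_iff]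

theorem inner_voronoiNormal_eq_one_iff (x z : E) :
    ⟪x, voronoiNormal z⟫ = 1 ↔ z ≠ 0 ∧ ‖x‖ = ‖x - z‖ := by
  rcases eq_or_ne z 0 with rfl | hz
  · simp
  · rw [inner_voronoiNormal, div_eq_one_iff_eq (by positivity), norm_eq_norm_sub_iff]
    exact (and_iff_right hz).symm

variable {Λ : Set E}

theorem convex_dualVorCell : Convex ℝ (dualVorCell Λ) := by
  rintro y₁ ⟨h₁, hle₁⟩ y₂ ⟨h₂, hle₂⟩ a b ha hb hab
  refine ⟨add_mem (Submodule.smul_mem _ a h₁) (Submodule.smul_mem _ b h₂), fun x hx ↦ ?_⟩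
  rw [inner_add_right, real_inner_smul_right, real_inner_smul_right]
  nlinarith [hle₁ x hx, hle₂ x hx]

theorem voronoiNormal_mem_dualVorCell {z : E} (hz : z ∈ Λ) : voronoiNormal z ∈ dualVorCell Λ :=
  ⟨Submodule.smul_mem _ _ (Submodule.subset_span hz),
    fun _ hx ↦ (inner_voronoiNormal_le_one_iff _ _).mpr (hx.2 z hz)⟩

/-- Projecting `w` onto `span Λ` gives a point of the Voronoi cell that pairs with
`span Λ` as `w` does. -/
theorem inner_le_one_of_mem_dualVorCell [(Submodule.span ℝ Λ).HasOrthogonalProjection]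
    {w y : E} (hw : ∀ z ∈ Λ, ‖w‖ ≤ ‖w - z‖) (hy : y ∈ dualVorCell Λ) : ⟪w, y⟫ ≤ 1 := by
  set V := Submodule.span ℝ Λ
  have hproj : V.starProjection w ∈ VorCell Λ := by
    refine ⟨V.starProjection_apply_mem w, fun z hz ↦ ?_⟩
    rw [norm_le_norm_sub_iff, V.inner_starProjection_of_mem w (Submodule.subset_span hz),
      ← norm_le_norm_sub_iff]
    exact hw z hz
  rw [← V.inner_starProjection_of_mem w hy.1]
  exact hy.2 _ hproj

theorem dualVorCell_subset_convexHull [CompleteSpace E]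
    [(Submodule.span ℝ Λ).HasOrthogonalProjection] {K : Set E}
    (hK : IsClosed (convexHull ℝ K)) (h0 : (0 : E) ∈ convexHull ℝ K)
    (hΛK : voronoiNormal '' Λ ⊆ convexHull ℝ K) : dualVorCell Λ ⊆ convexHull ℝ K := by
  intro y hy
  by_contra hyK
  obtain ⟨w, hwK, hwy⟩ := exists_inner_lt_one_lt_inner (convex_convexHull ℝ K) hK h0 hyK
  have hw : ∀ z ∈ Λ, ‖w‖ ≤ ‖w - z‖ := fun z hz ↦
    (inner_voronoiNormal_le_one_iff w z).mp (hwK _ (hΛK ⟨z, hz, rfl⟩)).le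
  linarith [inner_le_one_of_mem_dualVorCell hw hy]

/-- All but finitely many `voronoiNormal z` lie in a small simplex around `0` inside `U`. -/
theorem exists_finite_image_voronoiNormal_subset_convexHull [FiniteDimensional ℝ E]
    (hΛ : ∀ r, (Λ ∩ closedBall 0 r).Finite) {U : Set E} (hU : U ∈ 𝓝 0) :
    ∃ K : Set E, K.Finite ∧ (∀ v ∈ K, v ∈ voronoiNormal '' Λ ∨ v ∈ U) ∧
      (0 : E) ∈ convexHull ℝ K ∧ voronoiNormal '' Λ ⊆ convexHull ℝ K := by
  obtain ⟨b, hb0, hbU⟩ := exists_mem_interior_convexHull_affineBasis hU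
  obtain ⟨δ, hδ, hδb⟩ := Metric.mem_nhds_iff.mp (mem_interior_iff_mem_nhds.mp hb0)
  set N := voronoiNormal '' (Λ ∩ closedBall 0 (2 / δ))
  have hbK : convexHull ℝ (range b) ⊆ convexHull ℝ (N ∪ range b) :=
    convexHull_mono subset_union_right
  refine ⟨N ∪ range b, ((hΛ _).image _).union (finite_range b), ?_, hbK (interior_subset hb0), ?_⟩
  · rintro v (⟨z, ⟨hz, -⟩, rfl⟩ | ⟨i, rfl⟩)
    exacts [Or.inl ⟨z, hz, rfl⟩, Or.inr (hbU (subset_convexHull ℝ _ ⟨i, rfl⟩))]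
  · rintro _ ⟨z, hz, rfl⟩
    by_cases hzr : ‖z‖ ≤ 2 / δ
    · exact subset_convexHull ℝ _ (Or.inl ⟨z, ⟨hz, mem_closedBall_zero_iff.mpr hzr⟩, rfl⟩)
    · refine hbK (hδb ?_)
      have hz : 0 < ‖z‖ := (div_pos two_pos hδ).trans (not_le.mp hzr)
      rw [not_le, div_lt_iff₀ hδ] at hzr
      rwa [mem_ball_zero_iff, norm_voronoiNormal, div_lt_iff₀ hz, mul_comm]

theorem convexHull_sep_voronoiNormal_subset {p : E} :
    convexHull ℝ {v ∈ voronoiNormal '' Λ | ⟪p, v⟫ = 1} ⊆ {y ∈ dualVorCell Λ | ⟪p, y⟫ = 1} := by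
  refine convexHull_min ?_ (convex_dualVorCell.inter (convex_hyperplane (innerₛₗ ℝ p).isLinear 1))
  rintro _ ⟨⟨z, hz, rfl⟩, hpz⟩
  exact ⟨voronoiNormal_mem_dualVorCell hz, hpz⟩

theorem sep_dualVorCell_subset_convexHull [FiniteDimensional ℝ E] {p : E}
    (hΛ : ∀ r, (Λ ∩ closedBall 0 r).Finite) (h0 : ∀ z ∈ Λ, ‖p‖ ≤ ‖p - z‖) :
    {y ∈ dualVorCell Λ | ⟪p, y⟫ = 1} ⊆ convexHull ℝ {v ∈ voronoiNormal '' Λ | ⟪p, v⟫ = 1} := by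
  rintro y ⟨hy, hpy⟩
  have hU : {v | ⟪p, v⟫ < 1} ∈ 𝓝 (0 : E) :=
    (isOpen_lt (continuous_const.inner continuous_id) continuous_const).mem_nhds (by simp)
  obtain ⟨K, hKfin, hKΛU, hK0, hΛK⟩ := exists_finite_image_voronoiNormal_subset_convexHull hΛ hU
  have hpK : ∀ v ∈ K, ⟪p, v⟫ ≤ 1 ∧ (⟪p, v⟫ = 1 → v ∈ voronoiNormal '' Λ) := by
    intro v hv
    rcases hKΛU v hv with ⟨z, hz, rfl⟩ | hvU
    · exact ⟨(inner_voronoiNormal_le_one_iff p z).mpr (h0 z hz), fun _ ↦ ⟨z, hz, rfl⟩⟩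
    · exact ⟨le_of_lt hvU, fun h ↦ absurd h (ne_of_lt hvU)⟩
  have hyK := dualVorCell_subset_convexHull (hKfin.isClosed_convexHull (𝕜 := ℝ)) hK0 hΛK hy
  refine convexHull_mono ?_ (mem_convexHull_inner_eq_one (fun v hv ↦ (hpK v hv).1) hyK hpy)
  exact fun v ⟨hvK, hpv⟩ ↦ ⟨(hpK v hvK).2 hpv, hpv⟩

theorem sep_image_voronoiNormal_inner_eq_one {p : E} (h0Λ : (0 : E) ∈ Λ)
    (h0 : ∀ z ∈ Λ, ‖p‖ ≤ ‖p - z‖) :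
    {v ∈ voronoiNormal '' Λ | ⟪p, v⟫ = 1} =
      {w | ∃ z ∈ Λ, (∀ z' ∈ Λ, ‖p - z‖ ≤ ‖p - z'‖) ∧ z ≠ 0 ∧ w = (2 / ‖z‖ ^ 2) • z} := by
  have hclosest : ∀ z ∈ Λ, (∀ z' ∈ Λ, ‖p - z‖ ≤ ‖p - z'‖) ↔ ‖p‖ = ‖p - z‖ := fun z hz ↦
    ⟨fun h ↦ (h0 z hz).antisymm (by simpa using h 0 h0Λ), fun h z' hz' ↦ h ▸ h0 z' hz'⟩
  ext w
  constructor
  · rintro ⟨⟨z, hz, rfl⟩, hpz⟩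
    obtain ⟨hz0, hpz⟩ := (inner_voronoiNormal_eq_one_iff p z).mp hpz
    exact ⟨z, hz, (hclosest z hz).mpr hpz, hz0, rfl⟩
  · rintro ⟨z, hz, hzp, hz0, rfl⟩
    exact ⟨⟨z, hz, rfl⟩, (inner_voronoiNormal_eq_one_iff p z).mpr ⟨hz0, (hclosest z hz).mp hzp⟩⟩

namespace IsLattice

theorem zero_mem (hΛ : IsLattice Λ) : (0 : E) ∈ Λ := by
  obtain ⟨k, b, -, rfl⟩ := hΛ
  exact ⟨0, by simp⟩

theorem finite_inter_of_isCompact {K : Set E} (hΛ : IsLattice Λ) (hK : IsCompact K) :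
    (Λ ∩ K).Finite := by
  obtain ⟨k, b, hb, rfl⟩ := hΛ
  set g : (Fin k → ℤ) → E := Fintype.linearCombination ℝ b ∘ Pi.map fun _ ↦ Int.cast
  have hg : IsClosedEmbedding g :=
    (LinearMap.isClosedEmbedding_of_injective (LinearMap.ker_eq_bot.mpr
      hb.fintypeLinearCombination_injective)).comp
      (IsClosedEmbedding.piMap fun _ ↦ Int.isClosedEmbedding_coe_real)
  refine ((hg.isCompact_preimage hK).finite_of_discrete.image g).subset ?_
  rintro _ ⟨⟨z, rfl⟩, hzK⟩
  exact ⟨z, hzK, rfl⟩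

end IsLattice

end

/-- If `0` is among the lattice points closest to `p`, then
`conv{ (2/‖z‖²)·z : z ∈ cl(p,Λ) \ {0} }` is a face of `VC(Λ)°`, namely the
(exposed) face on which the linear functional `y ↦ ⟨p,y⟩` attains the value `1`. -/
theorem face_of_dual_voronoi_cell (d : ℕ) (Λ : Set (EuclideanSpace ℝ (Fin d)))
    (hΛ : IsLattice Λ) (p : EuclideanSpace ℝ (Fin d))
    (h0 : ∀ z ∈ Λ, ‖p‖ ≤ ‖p - z‖) :
    (∀ y ∈ dualVorCell Λ, ⟪p, y⟫ ≤ 1) ∧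
      convexHull ℝ {w : EuclideanSpace ℝ (Fin d) |
          ∃ z ∈ Λ, (∀ z' ∈ Λ, ‖p - z‖ ≤ ‖p - z'‖) ∧ z ≠ 0 ∧ w = (2 / ‖z‖ ^ 2) • z} =
        {y ∈ dualVorCell Λ | ⟪p, y⟫ = 1} := by
  rw [← sep_image_voronoiNormal_inner_eq_one hΛ.zero_mem h0]
  refine ⟨fun y hy ↦ inner_le_one_of_mem_dualVorCell h0 hy,
    convexHull_sep_voronoiNormal_subset.antisymm ?_⟩
  exact sep_dualVorCell_subset_convexHull
    (fun r ↦ hΛ.finite_inter_of_isCompact (isCompact_closedBall 0 r)) h0
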